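/- Let n > 2, let V = 𝔽₂ⁿ, and let W ≤ V be a fixed subspace with dim(W) = n − 2. Then Sym(V) contains exactly 2^{n−2} − 1 elementary abelian regular subgroups T' such that T ∩ T' = σ_W. -/

import Mathlib

open Equiv

/-- `V n` is the `n`-dimensional vector space over the field with two elements. -/
abbrev V (n : ℕ) : Type := Fin n → ZMod 2

/-- The subgroup `σ_W` of `Sym(V)` consisting of the translations `x ↦ x + w` with `w ∈ W`. -/
def sigmaSub (n : ℕ) (W : Submodule (ZMod 2) (V n)) : Subgroup (Equiv.Perm (V n)) where
  carrier := {g | ∃ v ∈ W, ∀ x, g x = x + v}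
  one_mem' := ⟨0, W.zero_mem, fun x => by simp⟩
  mul_mem' := by
    rintro a b ⟨v, hv, ha⟩ ⟨w, hw, hb⟩
    exact ⟨w + v, W.add_mem hw hv, fun x => by
      simp [Equiv.Perm.mul_apply, ha, hb, add_assoc]⟩
  inv_mem' := by
    rintro a ⟨v, hv, ha⟩
    refine ⟨-v, W.neg_mem hv, fun x => a.injective ?_⟩
    rw [show a (a⁻¹ x) = x from a.apply_symm_apply x, ha]
    abel

/-- The translation group `T`, i.e. the image of the right regular representation
of `(V, +)` in `Sym(V)`. -/
def T (n : ℕ) : Subgroup (Equiv.Perm (V n)) := sigmaSub n ⊤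

/-- The affine group `AGL(V) = T ⋊ GL(V)`, consisting of the invertible affine
transformations `x ↦ L x + v` of `V`. -/
def AGL (n : ℕ) : Subgroup (Equiv.Perm (V n)) where
  carrier := {g | ∃ (L : V n ≃ₗ[ZMod 2] V n) (v : V n), ∀ x, g x = L x + v}
  one_mem' := ⟨LinearEquiv.refl _ _, 0, fun x => by simp⟩
  mul_mem' := by
    rintro a b ⟨L, v, ha⟩ ⟨M, w, hb⟩
    exact ⟨M ≪≫ₗ L, L w + v, fun x => by
      simp [Equiv.Perm.mul_apply, ha, hb, map_add, add_assoc]⟩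
  inv_mem' := by
    rintro a ⟨L, v, ha⟩
    refine ⟨L.symm, -(L.symm v), fun x => a.injective ?_⟩
    rw [show a (a⁻¹ x) = x from a.apply_symm_apply x, ha, map_add, map_neg, LinearEquiv.apply_symm_apply,
      LinearEquiv.apply_symm_apply]
    abel

/-- The conjugate subgroup `H^g = g⁻¹ H g`. -/
def conjSub {G : Type*} [Group G] (H : Subgroup G) (g : G) : Subgroup G :=
  H.map (MulAut.conj g⁻¹).toMonoidHom

/-- A subgroup of `Sym(V)` is an elementary abelian regular subgroup if it is an
elementary abelian 2-group (every element squares to the identity) acting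
regularly (sharply transitively) on `V`. -/
def IsElemAbelianRegular (n : ℕ) (R : Subgroup (Equiv.Perm (V n))) : Prop :=
  (∀ r ∈ R, r * r = 1) ∧ ∀ x y : V n, ∃! r : R, (r : Equiv.Perm (V n)) x = y

/-- `A` is a normal subgroup of `B` (as subgroups of a common ambient group). -/
def NormalIn {G : Type*} [Group G] (A B : Subgroup G) : Prop :=
  A ≤ B ∧ ∀ b ∈ B, ∀ a ∈ A, b * a * b⁻¹ ∈ A

/-- `S` is a Sylow `2`-subgroup of `K` (as subgroups of a common ambient group):
`S` is a `2`-subgroup of `K` maximal among the `2`-subgroups of `K`. -/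
def IsSylow2Of {G : Type*} [Group G] (S K : Subgroup G) : Prop :=
  S ≤ K ∧ IsPGroup 2 S ∧ ∀ Q : Subgroup G, Q ≤ K → IsPGroup 2 Q → S ≤ Q → Q = S

/-!
Let `R` be an elementary abelian regular subgroup of `Sym(V)` with `T ∩ R = σ_W`, and write `τ_x`
for the unique element of `R` with `τ_x 0 = x`. Since `R` is abelian, each `τ_x` commutes with the
translations by `W`, so the defect `τ_x y - x - y` only depends on `x` and `y` modulo `W`. Modulo `W`,
`(x, y) ↦ τ_x y` is a group law of exponent two on `V / W ≅ 𝔽₂²`, and such a law is addition; hence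
the defect lies in `W`, vanishes when `x ∈ W` or `x ≡ y`, and takes one and the same value `c ≠ 0`
on the three pairs of distinct nonzero classes. So `τ_x y = y + x + β(x, y) c`, where `β` is the
determinant of the images of `x, y` in `𝔽₂²`. Conversely, every `0 ≠ c ∈ W` gives such a group, and
different `c` give different groups: there are `|W| - 1 = 2^(n-2) - 1` of them.
-/

namespace ElemAbelianRegular

lemma addRight_injective {G : Type*} [AddGroup G] :
    Function.Injective (Equiv.addRight : G → Perm G) := fun u v h => by
  simpa using DFunLike.congr_fun h 0

lemma natCard_subtype_ne {α : Type*} [Finite α] (a : α) :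
    Nat.card {x // x ≠ a} = Nat.card α - 1 := by
  classical
  have := Fintype.ofFinite α
  rw [Nat.card_eq_fintype_card, Nat.card_eq_fintype_card, Fintype.card_subtype_compl,
    Fintype.card_subtype_eq]

section Det

variable (R : Type*) [CommRing R]

def detForm : LinearMap.BilinForm R (R × R) :=
  LinearMap.mk₂ R (fun p q => p.1 * q.2 - p.2 * q.1)
    (fun _ _ _ => by simp only [Prod.fst_add, Prod.snd_add]; ring)
    (fun _ _ _ => by simp only [Prod.smul_fst, Prod.smul_snd, smul_eq_mul]; ring)
    (fun _ _ _ => by simp only [Prod.fst_add, Prod.snd_add]; ring)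
    (fun _ _ _ => by simp only [Prod.smul_fst, Prod.smul_snd, smul_eq_mul]; ring)

variable {R}

@[simp]
lemma detForm_apply (p q : R × R) : detForm R p q = p.1 * q.2 - p.2 * q.1 := rfl

variable {M : Type*} [AddCommGroup M] [Module R M]

lemma isAlt_detForm_comp (π : M →ₗ[R] R × R) : ((detForm R).comp π π).IsAlt := fun x => by
  simp [LinearMap.BilinForm.comp_apply, mul_comm]

lemma ker_detForm_comp {π : M →ₗ[R] R × R} (hπ : Function.Surjective π) :
    LinearMap.ker ((detForm R).comp π π) = LinearMap.ker π := by
  ext x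
  simp only [LinearMap.mem_ker]
  constructor
  · intro h
    obtain ⟨a, ha⟩ := hπ (1, 0)
    obtain ⟨b, hb⟩ := hπ (0, 1)
    have h1 := LinearMap.congr_fun h b
    have h2 := LinearMap.congr_fun h a
    simp only [LinearMap.BilinForm.comp_apply, detForm_apply, ha, hb, LinearMap.zero_apply] at h1 h2
    ext <;> simp_all
  · intro h
    ext y
    simp [LinearMap.BilinForm.comp_apply, h]

lemma detForm_comp_ne_zero [Nontrivial R] {π : M →ₗ[R] R × R} (hπ : Function.Surjective π) :
    (detForm R).comp π π ≠ 0 := by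
  obtain ⟨a, ha⟩ := hπ (1, 0)
  obtain ⟨b, hb⟩ := hπ (0, 1)
  intro h
  simpa [LinearMap.BilinForm.comp_apply, ha, hb] using LinearMap.congr_fun₂ h a b

end Det

lemma exists_surjective_ker_eq {K M : Type*} [Field K] [AddCommGroup M] [Module K M]
    (W : Submodule K M) (h : Module.finrank K (M ⧸ W) = 2) :
    ∃ π : M →ₗ[K] K × K, Function.Surjective π ∧ LinearMap.ker π = W := by
  have := Module.finite_of_finrank_eq_succ h
  obtain ⟨e⟩ : Nonempty ((M ⧸ W) ≃ₗ[K] K × K) :=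
    FiniteDimensional.nonempty_linearEquiv_of_finrank_eq (by simp [h])
  exact ⟨e.toLinearMap ∘ₗ W.mkQ, e.surjective.comp W.mkQ_surjective, by
    rw [LinearEquiv.ker_comp, Submodule.ker_mkQ]⟩

section TwistedTranslation

variable {M : Type*} [AddCommGroup M] [Module (ZMod 2) M] {β : LinearMap.BilinForm (ZMod 2) M}
  {c : M}

def twistedTranslation (β : LinearMap.BilinForm (ZMod 2) M) (c v y : M) : M :=
  y + v + β v y • c

lemma twistedTranslation_zero (y : M) : twistedTranslation β c 0 y = y := by
  simp [twistedTranslation]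

lemma twistedTranslation_apply_zero (v : M) : twistedTranslation β c v 0 = v := by
  simp [twistedTranslation]

lemma apply_eq_zero_of_mem_ker (hβ : β.IsAlt) (hc : c ∈ LinearMap.ker β) (y : M) :
    β y c = 0 := by
  rw [← hβ.neg_eq, LinearMap.mem_ker.1 hc, LinearMap.zero_apply, neg_zero]

lemma twistedTranslation_comp (hβ : β.IsAlt) (hc : c ∈ LinearMap.ker β) (v w y : M) :
    twistedTranslation β c v (twistedTranslation β c w y) =
      twistedTranslation β c (v + w + β v w • c) y := by
  simp only [twistedTranslation, map_add, map_smul, LinearMap.add_apply, LinearMap.smul_apply,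
    LinearMap.mem_ker.1 hc, LinearMap.zero_apply, apply_eq_zero_of_mem_ker hβ hc, smul_eq_mul]
  module

lemma twistedTranslation_involutive (hβ : β.IsAlt) (hc : c ∈ LinearMap.ker β) (v : M) :
    Function.Involutive (twistedTranslation β c v) := fun y => by
  rw [twistedTranslation_comp hβ hc, hβ.self_eq_zero, zero_smul, add_zero, ZModModule.add_self,
    twistedTranslation_zero]

lemma twistedTranslation_eq_iff (hc : c ∈ LinearMap.ker β) {v x y : M} :
    twistedTranslation β c v x = y ↔ v = (y - x) + β (y - x) x • c := by
  have hcx : β c x = 0 := by rw [LinearMap.mem_ker.1 hc, LinearMap.zero_apply]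
  constructor
  · rintro rfl
    simp only [twistedTranslation, add_sub_cancel_left, map_add, map_smul, LinearMap.add_apply,
      LinearMap.smul_apply, hcx, smul_eq_mul, mul_zero, add_zero, add_assoc, ZModModule.add_self]
  · rintro rfl
    simp only [twistedTranslation, map_add, map_smul, LinearMap.add_apply,
      LinearMap.smul_apply, hcx, smul_eq_mul, mul_zero, add_zero, add_assoc, ZModModule.add_self]
    abel

end TwistedTranslation

section TwistedGroup

variable {M : Type*} [AddCommGroup M] [Module (ZMod 2) M] {β : LinearMap.BilinForm (ZMod 2) M}
  (hβ : β.IsAlt) (c : LinearMap.ker β)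

def twistedPerm (v : M) : Perm M :=
  (twistedTranslation_involutive hβ c.2 v).toPerm

@[simp]
lemma twistedPerm_apply (v y : M) : twistedPerm hβ c v y = twistedTranslation β c v y := rfl

lemma twistedPerm_mul (v w : M) :
    twistedPerm hβ c v * twistedPerm hβ c w = twistedPerm hβ c (v + w + β v w • c) :=
  Equiv.ext (twistedTranslation_comp hβ c.2 v w)

lemma twistedPerm_mul_self (v : M) : twistedPerm hβ c v * twistedPerm hβ c v = 1 :=
  Equiv.ext (twistedTranslation_involutive hβ c.2 v)

def twistedGroup : Subgroup (Perm M) where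
  carrier := Set.range (twistedPerm hβ c)
  one_mem' := ⟨0, Equiv.ext twistedTranslation_zero⟩
  mul_mem' := by
    rintro _ _ ⟨v, rfl⟩ ⟨w, rfl⟩
    exact ⟨_, (twistedPerm_mul hβ c v w).symm⟩
  inv_mem' := by
    rintro _ ⟨v, rfl⟩
    exact ⟨v, (inv_eq_of_mul_eq_one_right (twistedPerm_mul_self hβ c v)).symm⟩

lemma mem_twistedGroup {p : Perm M} : p ∈ twistedGroup hβ c ↔ ∃ v, twistedPerm hβ c v = p :=
  Iff.rfl

lemma twistedGroup_mul_self : ∀ r ∈ twistedGroup hβ c, r * r = 1 := by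
  rintro _ ⟨v, rfl⟩
  exact twistedPerm_mul_self hβ c v

lemma twistedGroup_isRegular (x y : M) : ∃! r : twistedGroup hβ c, (r : Perm M) x = y :=
  ⟨⟨twistedPerm hβ c _, _, rfl⟩, (twistedTranslation_eq_iff c.2).2 rfl, by
    rintro ⟨_, v, rfl⟩ h
    obtain rfl := (twistedTranslation_eq_iff c.2).1 h
    rfl⟩

variable {c}

lemma twistedPerm_eq_addRight_iff (hc : c ≠ 0) {v u : M} :
    twistedPerm hβ c v = Equiv.addRight u ↔ v = u ∧ v ∈ LinearMap.ker β := by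
  constructor
  · intro h
    obtain rfl : v = u := by
      simpa [twistedTranslation_apply_zero] using DFunLike.congr_fun h 0
    refine ⟨rfl, LinearMap.mem_ker.2 (LinearMap.ext fun y => ?_)⟩
    have hy := DFunLike.congr_fun h y
    simp only [twistedPerm_apply, twistedTranslation, coe_addRight, add_eq_left] at hy
    exact (smul_eq_zero.1 hy).resolve_right (by simpa using hc)
  · rintro ⟨rfl, hv⟩
    ext y
    simp [twistedTranslation, LinearMap.mem_ker.1 hv]

lemma addRight_mem_twistedGroup_iff (hc : c ≠ 0) {u : M} :
    Equiv.addRight u ∈ twistedGroup hβ c ↔ u ∈ LinearMap.ker β := by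
  simp only [mem_twistedGroup, twistedPerm_eq_addRight_iff hβ hc, exists_eq_left]

lemma twistedGroup_injective (hβ0 : β ≠ 0) : Function.Injective (twistedGroup hβ) := by
  intro c c' h
  obtain ⟨a, b, hab⟩ : ∃ a b, β a b ≠ 0 := by
    by_contra! h0
    exact hβ0 (LinearMap.ext₂ h0)
  obtain ⟨v, hv⟩ : twistedPerm hβ c a ∈ twistedGroup hβ c' := h ▸ ⟨a, rfl⟩
  obtain rfl : v = a := by
    simpa [twistedTranslation_apply_zero] using DFunLike.congr_fun hv 0
  have hb := DFunLike.congr_fun hv b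
  simp only [twistedPerm_apply, twistedTranslation, add_right_inj] at hb
  exact Subtype.ext (smul_right_injective M hab hb).symm

end TwistedGroup

section Transporter

variable {X : Type*} [Zero X] {R : Subgroup (Perm X)}

noncomputable def transporter (hreg : ∀ x y : X, ∃! r : R, (r : Perm X) x = y) (x : X) :
    Perm X :=
  (hreg 0 x).exists.choose

variable (hreg : ∀ x y : X, ∃! r : R, (r : Perm X) x = y)

lemma transporter_mem (x : X) : transporter hreg x ∈ R := (hreg 0 x).exists.choose.2

@[simp]
lemma transporter_apply_zero (x : X) : transporter hreg x 0 = x := (hreg 0 x).exists.choose_spec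

lemma transporter_eq_of_mem {r : Perm X} (hr : r ∈ R) : transporter hreg (r 0) = r :=
  congrArg Subtype.val ((hreg 0 (r 0)).unique (hreg 0 (r 0)).exists.choose_spec
    (y₂ := ⟨r, hr⟩) rfl)

variable {hreg}

lemma transporter_transporter (hsq : ∀ r ∈ R, r * r = 1) (x y : X) :
    transporter hreg x (transporter hreg x y) = y := by
  rw [← Perm.mul_apply, hsq _ (transporter_mem hreg x), Perm.one_apply]

lemma transporter_apply_self (hsq : ∀ r ∈ R, r * r = 1) (x : X) : transporter hreg x x = 0 := by
  simpa using transporter_transporter (hreg := hreg) hsq x 0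

lemma transporter_mul_comm (hsq : ∀ r ∈ R, r * r = 1) (x y : X) :
    transporter hreg x * transporter hreg y = transporter hreg y * transporter hreg x := by
  have hR : ∀ r s : R, Commute r s := Commute.of_orderOf_dvd_two fun r =>
    orderOf_dvd_of_pow_eq_one (by rw [pow_two]; exact Subtype.ext (hsq r r.2))
  exact congrArg Subtype.val
    (hR ⟨_, transporter_mem hreg x⟩ ⟨_, transporter_mem hreg y⟩).eq

lemma transporter_comm (hsq : ∀ r ∈ R, r * r = 1) (x y : X) :
    transporter hreg x y = transporter hreg y x := by
  simpa using DFunLike.congr_fun (transporter_mul_comm (hreg := hreg) hsq x y) 0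

end Transporter

section Translations

variable {M : Type*} [AddCommGroup M] {R : Subgroup (Perm M)}
  {hreg : ∀ x y : M, ∃! r : R, (r : Perm M) x = y} {w : M}

lemma transporter_of_addRight_mem (hw : Equiv.addRight w ∈ R) :
    transporter hreg w = Equiv.addRight w := by
  simpa using transporter_eq_of_mem hreg hw

lemma transporter_apply_add (hsq : ∀ r ∈ R, r * r = 1) (hw : Equiv.addRight w ∈ R) (x y : M) :
    transporter hreg x (y + w) = transporter hreg x y + w := by
  have h := DFunLike.congr_fun (transporter_mul_comm (hreg := hreg) hsq x w) y
  simpa [transporter_of_addRight_mem hw] using h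

lemma transporter_apply_of_addRight_mem (hsq : ∀ r ∈ R, r * r = 1)
    (hw : Equiv.addRight w ∈ R) (x : M) : transporter hreg x w = x + w := by
  simpa using transporter_apply_add (hreg := hreg) hsq hw x 0

lemma transporter_add_apply (hsq : ∀ r ∈ R, r * r = 1) (hw : Equiv.addRight w ∈ R) (x y : M) :
    transporter hreg (x + w) y = transporter hreg x y + w := by
  rw [transporter_comm hsq, transporter_apply_add hsq hw, transporter_comm hsq]

noncomputable def twist (hreg : ∀ x y : M, ∃! r : R, (r : Perm M) x = y) (x y : M) : M :=
  transporter hreg x y - x - y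

lemma twist_comm (hsq : ∀ r ∈ R, r * r = 1) (x y : M) : twist hreg x y = twist hreg y x := by
  rw [twist, twist, transporter_comm hsq]
  abel

end Translations

/-- The hypotheses hold for `z = u ⋆ v` whenever `⋆` is a group law of exponent two on `𝔽₂²` with
neutral element `0`; so any such law is addition. -/
lemma eq_add_of_eq_iff_eq_zero (u v z : ZMod 2 × ZMod 2) (hu : z = u ↔ v = 0)
    (hv : z = v ↔ u = 0) (h0 : z = 0 ↔ u = v) : z = u + v := by
  revert u v z
  decide

section Classification

variable {M : Type*} [AddCommGroup M] [Module (ZMod 2) M] {R : Subgroup (Perm M)}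
  {hreg : ∀ x y : M, ∃! r : R, (r : Perm M) x = y} {π : M →ₗ[ZMod 2] ZMod 2 × ZMod 2}
lemma map_transporter_eq_left_iff (hsq : ∀ r ∈ R, r * r = 1)
    (htrans : ∀ u, Equiv.addRight u ∈ R ↔ π u = 0) (x y : M) :
    π (transporter hreg x y) = π x ↔ π y = 0 := by
  constructor
  · intro h
    have hw : π (transporter hreg x y - x) = 0 := by rw [map_sub, h, sub_self]
    have hy : transporter hreg x y = transporter hreg x (transporter hreg x y - x) := by
      rw [transporter_apply_of_addRight_mem hsq ((htrans _).2 hw), add_sub_cancel]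
    rwa [(transporter hreg x).injective hy]
  · intro h
    rw [transporter_apply_of_addRight_mem hsq ((htrans y).2 h), map_add, h, add_zero]

lemma map_transporter_eq_zero_iff (hsq : ∀ r ∈ R, r * r = 1)
    (htrans : ∀ u, Equiv.addRight u ∈ R ↔ π u = 0) (x y : M) :
    π (transporter hreg x y) = 0 ↔ π x = π y := by
  constructor
  · intro h
    have hy := transporter_transporter (hreg := hreg) hsq x y
    rw [transporter_apply_of_addRight_mem hsq ((htrans _).2 h)] at hy
    rw [← hy, map_add, h, add_zero]
  · intro h
    have hw : π (y - x) = 0 := by rw [map_sub, h, sub_self]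
    rwa [← add_sub_cancel x y, transporter_apply_add hsq ((htrans _).2 hw),
      transporter_apply_self hsq, zero_add]

lemma map_transporter (hsq : ∀ r ∈ R, r * r = 1)
    (htrans : ∀ u, Equiv.addRight u ∈ R ↔ π u = 0) (x y : M) :
    π (transporter hreg x y) = π x + π y :=
  eq_add_of_eq_iff_eq_zero _ _ _ (map_transporter_eq_left_iff hsq htrans x y)
    (transporter_comm hsq x y ▸ map_transporter_eq_left_iff hsq htrans y x)
    (map_transporter_eq_zero_iff hsq htrans x y)

lemma map_twist (hsq : ∀ r ∈ R, r * r = 1) (htrans : ∀ u, Equiv.addRight u ∈ R ↔ π u = 0)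
    (x y : M) : π (twist hreg x y) = 0 := by
  rw [twist, map_sub, map_sub, map_transporter hsq htrans]
  abel

lemma twist_add_left (hsq : ∀ r ∈ R, r * r = 1) (htrans : ∀ u, Equiv.addRight u ∈ R ↔ π u = 0)
    {w : M} (hw : π w = 0) (x y : M) : twist hreg (x + w) y = twist hreg x y := by
  rw [twist, twist, transporter_add_apply hsq ((htrans w).2 hw)]
  abel

lemma twist_add_right (hsq : ∀ r ∈ R, r * r = 1) (htrans : ∀ u, Equiv.addRight u ∈ R ↔ π u = 0)
    {w : M} (hw : π w = 0) (x y : M) : twist hreg x (y + w) = twist hreg x y := by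
  rw [twist_comm hsq, twist_add_left hsq htrans hw, twist_comm hsq]

lemma twist_zero_left (htrans : ∀ u, Equiv.addRight u ∈ R ↔ π u = 0) (y : M) :
    twist hreg 0 y = 0 := by
  simp [twist, transporter_of_addRight_mem ((htrans 0).2 (map_zero π))]

lemma twist_self (hsq : ∀ r ∈ R, r * r = 1) (x : M) : twist hreg x x = 0 := by
  rw [twist, transporter_apply_self hsq, zero_sub, ← neg_add', ZModModule.add_self, neg_zero]

lemma twist_self_add (hsq : ∀ r ∈ R, r * r = 1) (htrans : ∀ u, Equiv.addRight u ∈ R ↔ π u = 0)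
    (x y : M) : twist hreg x (x + y) = twist hreg x y := by
  have hxy : x + y = transporter hreg x y + -twist hreg x y := by rw [twist]; abel
  have hneg : π (-twist hreg x y) = 0 := by rw [map_neg, map_twist hsq htrans, neg_zero]
  have key : transporter hreg x (x + y) = y - twist hreg x y := by
    rw [hxy, transporter_apply_add hsq ((htrans _).2 hneg), transporter_transporter hsq,
      sub_eq_add_neg]
  rw [twist, key]
  abel_nf
  simp [two_zsmul, ZModModule.add_self, ZModModule.neg_eq_self]

lemma twist_zero_right (hsq : ∀ r ∈ R, r * r = 1) (htrans : ∀ u, Equiv.addRight u ∈ R ↔ π u = 0)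
    (x : M) : twist hreg x 0 = 0 := by
  rw [twist_comm hsq, twist_zero_left htrans]

lemma twist_eq_detForm_smul (hsq : ∀ r ∈ R, r * r = 1)
    (htrans : ∀ u, Equiv.addRight u ∈ R ↔ π u = 0) {a b : M} (ha : π a = (1, 0))
    (hb : π b = (0, 1)) (x y : M) :
    twist hreg x y = detForm (ZMod 2) (π x) (π y) • twist hreg a b := by
  -- both sides only depend on `π x` and `π y`: check them on the representatives `0, a, b, a + b`
  set s : ZMod 2 × ZMod 2 → M := fun p => p.1 • a + p.2 • b
  have hs : ∀ z, π (s (π z) - z) = 0 := fun z => by ext <;> simp [s, ha, hb]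
  have hrep : twist hreg x y = twist hreg (s (π x)) (s (π y)) := by
    rw [← add_sub_cancel x (s (π x)), ← add_sub_cancel y (s (π y)),
      twist_add_left hsq htrans (hs x), twist_add_right hsq htrans (hs y)]
  have hba : twist hreg b a = twist hreg a b := twist_comm hsq b a
  have ha_ab : twist hreg a (a + b) = twist hreg a b := twist_self_add hsq htrans a b
  have hab_a : twist hreg (a + b) a = twist hreg a b := by rw [twist_comm hsq, ha_ab]
  have hb_ab : twist hreg b (a + b) = twist hreg a b := by
    rw [add_comm, twist_self_add hsq htrans, hba]
  have hab_b : twist hreg (a + b) b = twist hreg a b := by rw [twist_comm hsq, hb_ab]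
  have hcases : ∀ p : ZMod 2 × ZMod 2, p = (0, 0) ∨ p = (1, 0) ∨ p = (0, 1) ∨ p = (1, 1) := by
    decide
  rw [hrep]
  rcases hcases (π x) with h | h | h | h <;> rcases hcases (π y) with h' | h' | h' | h' <;>
    simp [s, h, h', twist_zero_left htrans, twist_zero_right hsq htrans, twist_self hsq, hba, ha_ab,
      hab_a, hb_ab, hab_b]

lemma transporter_eq_twistedPerm (hsq : ∀ r ∈ R, r * r = 1)
    (htrans : ∀ u, Equiv.addRight u ∈ R ↔ π u = 0) {a b : M} (ha : π a = (1, 0))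
    (hb : π b = (0, 1)) (hc : twist hreg a b ∈ LinearMap.ker ((detForm (ZMod 2)).comp π π))
    (v : M) : transporter hreg v = twistedPerm (isAlt_detForm_comp π) ⟨_, hc⟩ v := by
  ext y
  have h := twist_eq_detForm_smul (hreg := hreg) hsq htrans ha hb v y
  rw [twist, sub_sub, sub_eq_iff_eq_add] at h
  rw [twistedPerm_apply, twistedTranslation, h, LinearMap.BilinForm.comp_apply]
  abel

theorem exists_eq_twistedGroup (hsq : ∀ r ∈ R, r * r = 1)
    (hreg : ∀ x y : M, ∃! r : R, (r : Perm M) x = y) (hπ : Function.Surjective π)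
    (htrans : ∀ u, Equiv.addRight u ∈ R ↔ π u = 0) :
    ∃ c : LinearMap.ker ((detForm (ZMod 2)).comp π π), c ≠ 0 ∧
      twistedGroup (isAlt_detForm_comp π) c = R := by
  obtain ⟨a, ha⟩ := hπ (1, 0)
  obtain ⟨b, hb⟩ := hπ (0, 1)
  have hc : twist hreg a b ∈ LinearMap.ker ((detForm (ZMod 2)).comp π π) := by
    rw [ker_detForm_comp hπ]
    exact map_twist hsq htrans a b
  have ht := transporter_eq_twistedPerm hsq htrans ha hb hc
  refine ⟨⟨_, hc⟩, fun h0 => ?_, ?_⟩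
  · have hta : transporter hreg a = Equiv.addRight a := by
      ext y
      simp [ht, twistedTranslation, show twist hreg a b = 0 from congrArg Subtype.val h0, add_comm]
    have := (htrans a).1 (hta ▸ transporter_mem hreg a)
    simp [ha] at this
  · ext p
    constructor
    · rintro ⟨v, rfl⟩
      exact ht v ▸ transporter_mem hreg v
    · intro hp
      exact ⟨p 0, by rw [← ht, transporter_eq_of_mem hreg hp]⟩

end Classification

lemma mem_sigmaSub {n : ℕ} {W : Submodule (ZMod 2) (V n)} {g : Perm (V n)} :
    g ∈ sigmaSub n W ↔ ∃ v ∈ W, g = Equiv.addRight v := by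
  simp only [sigmaSub, Subgroup.mem_mk, Submonoid.mem_mk, Subsemigroup.mem_mk, Set.mem_ofPred_eq,
    Equiv.ext_iff, coe_addRight]

lemma inf_T_eq_sigmaSub_iff {n : ℕ} {W : Submodule (ZMod 2) (V n)} {R : Subgroup (Perm (V n))} :
    T n ⊓ R = sigmaSub n W ↔ ∀ u, Equiv.addRight u ∈ R ↔ u ∈ W := by
  have hT : ∀ g, g ∈ T n ↔ ∃ u, g = Equiv.addRight u := by simp [T, mem_sigmaSub]
  constructor
  · intro h u
    simpa [hT, mem_sigmaSub, addRight_injective.eq_iff] using SetLike.ext_iff.1 h (Equiv.addRight u)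
  · intro h
    ext g
    simp only [Subgroup.mem_inf, hT, mem_sigmaSub]
    constructor
    · rintro ⟨⟨u, rfl⟩, hu⟩
      exact ⟨u, (h u).1 hu, rfl⟩
    · rintro ⟨u, hu, rfl⟩
      exact ⟨⟨u, rfl⟩, (h u).2 hu⟩

end ElemAbelianRegular

open ElemAbelianRegular in
/-- For a fixed subspace `W ≤ V` with `dim W = n - 2`, the group `Sym(V)` contains
exactly `2^(n-2) - 1` elementary abelian regular subgroups `T'` with `T ∩ T' = σ_W`. -/
theorem card_elemAbelianRegular_inter_eq_sigmaW
    (n : ℕ) (hn : 2 < n)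
    (W : Submodule (ZMod 2) (V n)) (hdim : Module.finrank (ZMod 2) W = n - 2) :
    Nat.card {R : Subgroup (Equiv.Perm (V n)) //
        IsElemAbelianRegular n R ∧ T n ⊓ R = sigmaSub n W} = 2 ^ (n - 2) - 1 := by
  have hquot : Module.finrank (ZMod 2) (V n ⧸ W) = 2 := by
    have := Submodule.finrank_quotient_add_finrank W
    rw [hdim, Module.finrank_fin_fun] at this
    omega
  obtain ⟨π, hπ, hker⟩ := exists_surjective_ker_eq W hquot
  have hβ := isAlt_detForm_comp π
  have hβW : LinearMap.ker ((detForm (ZMod 2)).comp π π) = W := (ker_detForm_comp hπ).trans hker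
  let Φ : {c : LinearMap.ker ((detForm (ZMod 2)).comp π π) // c ≠ 0} →
      {R : Subgroup (Perm (V n)) // IsElemAbelianRegular n R ∧ T n ⊓ R = sigmaSub n W} :=
    fun c => ⟨twistedGroup hβ c, ⟨twistedGroup_mul_self hβ c, twistedGroup_isRegular hβ c⟩,
      inf_T_eq_sigmaSub_iff.2 fun u => by rw [addRight_mem_twistedGroup_iff hβ c.2, hβW]⟩
  have hΦ : Function.Bijective Φ := by
    refine ⟨fun c c' h => Subtype.ext (twistedGroup_injective hβ (detForm_comp_ne_zero hπ)
      (congrArg Subtype.val h)), ?_⟩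
    rintro ⟨R, ⟨hsq, hreg⟩, hR⟩
    obtain ⟨c, hc0, rfl⟩ := exists_eq_twistedGroup hsq hreg hπ fun u => by
      rw [inf_T_eq_sigmaSub_iff.1 hR, ← hker, LinearMap.mem_ker]
    exact ⟨⟨c, hc0⟩, rfl⟩
  rw [← Nat.card_eq_of_bijective Φ hΦ, natCard_subtype_ne, hβW,
    Module.natCard_eq_pow_finrank (K := ZMod 2), hdim, Nat.card_zmod]
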